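/- Assume k₁² ≠ k₂². Then for every x ≠ y in ℝ³ and all constant vectors ν_x, ν_y ∈ ℝ³, the following 3×3 matrix identity holds: iωη T(∂_x,ν_x)E₁₂(x,y) ν_y^⊤ + γ ν_x (T(∂_y,ν_y)E₂₁(x,y))^⊤ − iωηγ E₂₂(x,y) ν_x ν_y^⊤ = (iωηγ/(k₁²−k₂²)) [(k_p²+k₁²)γ_{k₁}(x,y) − (k_p²+k₂²)γ_{k₂}(x,y)] ν_x ν_y^⊤ − (2iμωηγ/((k₁²−k₂²)(λ+2μ))) [ (M(∂_x,ν_x)∇_x(γ_{k₁}−γ_{k₂})(x,y)) ν_y^⊤ + ν_x (M(∂_y,ν_y)∇_y(γ_{k₁}−γ_{k₂})(x,y))^⊤ ], where in the first traction term T and M act in x and in the second they act in y, and a b^⊤ denotes the outer product of column vectors. -/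

import Mathlib

noncomputable section

open scoped BigOperators

/-- Three-dimensional Euclidean space. -/
abbrev V3 : Type := EuclideanSpace ℝ (Fin 3)

/-- Partial derivative in the `i`-th coordinate direction. -/
def pd (i : Fin 3) (f : V3 → ℂ) : V3 → ℂ :=
  fun x => fderiv ℝ f x (EuclideanSpace.single i (1 : ℝ))

/-- Laplacian. -/
def lap (f : V3 → ℂ) : V3 → ℂ := fun x => ∑ i, pd i (pd i f) x

/-- Directional derivative `ν·∇` along the constant vector `ν`. -/
def dirD (ν : Fin 3 → ℝ) (f : V3 → ℂ) : V3 → ℂ :=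
  fun x => ∑ i, (ν i : ℂ) * pd i f x

/-- Divergence of a vector field. -/
def vdiv (v : Fin 3 → V3 → ℂ) : V3 → ℂ := fun x => ∑ i, pd i (v i) x

/-- Levi–Civita symbol on `Fin 3`. -/
def eps (i j k : Fin 3) : ℝ :=
  if (i, j, k) = (0, 1, 2) ∨ (i, j, k) = (1, 2, 0) ∨ (i, j, k) = (2, 0, 1) then 1
  else if (i, j, k) = (0, 2, 1) ∨ (i, j, k) = (2, 1, 0) ∨ (i, j, k) = (1, 0, 2) then -1
  else 0

/-- Curl of a vector field: `(curl v)_i = Σ_{l,m} ε_{ilm} ∂_l v_m`. -/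
def curl (v : Fin 3 → V3 → ℂ) : Fin 3 → V3 → ℂ :=
  fun i x => ∑ l, ∑ m, (eps i l m : ℂ) * pd l (v m) x

/-- Cross product of a constant real vector with a complex vector. -/
def crossR (ν : Fin 3 → ℝ) (w : Fin 3 → ℂ) : Fin 3 → ℂ :=
  fun i => ∑ l, ∑ m, (eps i l m : ℂ) * (ν l : ℂ) * w m

/-- Günter derivative `M(∂,ν)` acting on a vector field,
with entries `m^{ij}(∂,ν) = ν^j ∂_i − ν^i ∂_j`. -/
def gunterM (ν : Fin 3 → ℝ) (v : Fin 3 → V3 → ℂ) : Fin 3 → V3 → ℂ :=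
  fun i x => ∑ j, ((ν j : ℂ) * pd i (v j) x - (ν i : ℂ) * pd j (v j) x)

/-- Traction operator `T(∂,ν)v = 2μ ∂_ν v + λ ν (∇·v) + μ ν × curl v`. -/
def traction (lam μ : ℝ) (ν : Fin 3 → ℝ) (v : Fin 3 → V3 → ℂ) : Fin 3 → V3 → ℂ :=
  fun i x => 2 * (μ : ℂ) * dirD ν (v i) x + (lam : ℂ) * (ν i : ℂ) * vdiv v x
    + (μ : ℂ) * crossR ν (fun m => curl v m x) i

/-- Helmholtz fundamental solution `γ_k(x,y) = exp(i k |x−y|)/(4π|x−y|)`. -/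
def gammaK (k : ℂ) (x y : V3) : ℂ :=
  Complex.exp (Complex.I * k * (‖x - y‖ : ℂ)) / ((4 * Real.pi * ‖x - y‖ : ℝ) : ℂ)

/-- Kupradze tensor entry `E(x,y)_{ij}`:
`E = (1/μ)γ_{k_s} I + (1/(ρω²)) ∇_x∇_x^⊤[γ_{k_s} − γ_{k_p}]`. -/
def kupE (μ ρ ω : ℝ) (ks kp : ℂ) (i j : Fin 3) (x y : V3) : ℂ :=
  (1 / (μ : ℂ)) * gammaK ks x y * (if i = j then 1 else 0)
    + (1 / ((ρ : ℂ) * (ω : ℂ) ^ 2)) *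
      pd i (pd j (fun w => gammaK ks w y - gammaK kp w y)) x

/-- Thermoelastic fundamental-solution block `E₁₁`, entry `(i,j)`. -/
def E11 (μ ρ ω : ℝ) (ks kp k1 k2 : ℂ) (i j : Fin 3) (x y : V3) : ℂ :=
  (1 / (μ : ℂ)) * gammaK ks x y * (if i = j then 1 else 0)
    + (1 / ((ρ : ℂ) * (ω : ℂ) ^ 2)) *
      pd i (pd j (fun w => gammaK ks w y - gammaK k1 w y)) x
    - (1 / ((ρ : ℂ) * (ω : ℂ) ^ 2)) * ((kp ^ 2 - k1 ^ 2) / (k1 ^ 2 - k2 ^ 2)) *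
      pd i (pd j (fun w => gammaK k1 w y - gammaK k2 w y)) x

/-- Thermoelastic fundamental-solution block `E₁₂`, component `j`. -/
def E12 (lam μ gam : ℝ) (k1 k2 : ℂ) (j : Fin 3) (x y : V3) : ℂ :=
  -((gam : ℂ) / ((k1 ^ 2 - k2 ^ 2) * ((lam : ℂ) + 2 * (μ : ℂ)))) *
    pd j (fun w => gammaK k1 w y - gammaK k2 w y) x

/-- Thermoelastic fundamental-solution block `E₂₁`, component `j`. -/
def E21 (lam μ ω η : ℝ) (k1 k2 : ℂ) (j : Fin 3) (x y : V3) : ℂ :=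
  (Complex.I * (ω : ℂ) * (η : ℂ) / ((k1 ^ 2 - k2 ^ 2) * ((lam : ℂ) + 2 * (μ : ℂ)))) *
    pd j (fun w => gammaK k1 w y - gammaK k2 w y) x

/-- Thermoelastic fundamental-solution block `E₂₂`. -/
def E22 (kp k1 k2 : ℂ) (x y : V3) : ℂ :=
  -(1 / (k1 ^ 2 - k2 ^ 2)) *
    ((kp ^ 2 - k1 ^ 2) * gammaK k1 x y - (kp ^ 2 - k2 ^ 2) * gammaK k2 x y)


/-- Auxiliary development. -/

lemma hasFDerivAt_norm_ne {v : V3} (hv : v ≠ 0) :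
    HasFDerivAt (fun w : V3 => ‖w‖) (‖v‖⁻¹ • (innerSL ℝ v)) v := by
  have hpos : 0 < ‖v‖ := norm_pos_iff.mpr hv
  have hinner : HasFDerivAt (fun w : V3 => inner ℝ w w : V3 → ℝ)
      ((fderivInnerCLM ℝ (v, v)).comp ((ContinuousLinearMap.id ℝ V3).prod
        (ContinuousLinearMap.id ℝ V3))) v :=
    (hasFDerivAt_id v).inner ℝ (hasFDerivAt_id v)
  have hsq : (inner ℝ v v : ℝ) ≠ 0 := by
    rw [real_inner_self_eq_norm_sq]; positivity
  have h := HasDerivAt.comp_hasFDerivAt (f := fun w : V3 => (inner ℝ w w : ℝ)) v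
    (Real.hasDerivAt_sqrt hsq) hinner
  have heq : (fun w : V3 => Real.sqrt (inner ℝ w w)) = fun w : V3 => ‖w‖ := by
    funext w
    rw [real_inner_self_eq_norm_sq, Real.sqrt_sq (norm_nonneg w)]
  rw [Function.comp_def, heq] at h
  refine h.congr_fderiv ?_
  ext e
  simp only [ContinuousLinearMap.coe_smul', Pi.smul_apply, ContinuousLinearMap.coe_comp',
    Function.comp_apply, ContinuousLinearMap.prod_apply, ContinuousLinearMap.coe_id', id_eq,
    fderivInnerCLM_apply, innerSL_apply_apply, smul_eq_mul]
  rw [real_inner_self_eq_norm_sq, Real.sqrt_sq hpos.le, real_inner_comm e v]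
  field_simp
  ring

/-- The radial profile of the Helmholtz fundamental solution. -/
def phi (k : ℂ) (t : ℝ) : ℂ :=
  Complex.exp (Complex.I * k * t) / (4 * (Real.pi : ℂ) * t)

/-- Radial coefficient of the first derivative. -/
def c1 (k : ℂ) (t : ℝ) : ℂ :=
  (Complex.I * k * t - 1) * Complex.exp (Complex.I * k * t) / (4 * (Real.pi : ℂ) * (t : ℂ) ^ 3)

/-- Radial coefficient appearing in second derivatives. -/
def c2 (k : ℂ) (t : ℝ) : ℂ :=
  (-(k ^ 2) * t ^ 2 - 3 * Complex.I * k * t + 3) * Complex.exp (Complex.I * k * t) /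
    (4 * (Real.pi : ℂ) * (t : ℂ) ^ 5)

lemma hasDerivAt_ofRealC (t : ℝ) : HasDerivAt (fun s : ℝ => (s : ℂ)) 1 t := by
  simpa using (hasDerivAt_id t).ofReal_comp

lemma pi_ne_zeroC : (Real.pi : ℂ) ≠ 0 := by
  exact_mod_cast Real.pi_ne_zero

lemma hasDerivAt_phi (k : ℂ) {t : ℝ} (ht : t ≠ 0) :
    HasDerivAt (phi k) (c1 k t * t) t := by
  have htC : (t : ℂ) ≠ 0 := by exact_mod_cast ht
  have hnum : HasDerivAt (fun s : ℝ => Complex.exp (Complex.I * k * s))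
      (Complex.exp (Complex.I * k * t) * (Complex.I * k)) t :=
    ((hasDerivAt_ofRealC t).const_mul (Complex.I * k)).cexp.congr_deriv (by ring)
  have hden : HasDerivAt (fun s : ℝ => 4 * (Real.pi : ℂ) * (s : ℂ))
      (4 * (Real.pi : ℂ)) t := by
    simpa using (hasDerivAt_ofRealC t).const_mul (4 * (Real.pi : ℂ))
  have hden_ne : 4 * (Real.pi : ℂ) * (t : ℂ) ≠ 0 := by
    simp [Real.pi_ne_zero, htC]
  have h := hnum.div hden hden_ne
  refine h.congr_deriv ?_
  rw [c1]
  field_simp [htC, pi_ne_zeroC]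

lemma hasDerivAt_c1 (k : ℂ) {t : ℝ} (ht : t ≠ 0) :
    HasDerivAt (c1 k) (c2 k t * t) t := by
  have htC : (t : ℂ) ≠ 0 := by exact_mod_cast ht
  have hexp : HasDerivAt (fun s : ℝ => Complex.exp (Complex.I * k * s))
      (Complex.exp (Complex.I * k * t) * (Complex.I * k)) t :=
    ((hasDerivAt_ofRealC t).const_mul (Complex.I * k)).cexp.congr_deriv (by ring)
  have hlin : HasDerivAt (fun s : ℝ => Complex.I * k * (s : ℂ) - 1) (Complex.I * k) t := by
    simpa using ((hasDerivAt_ofRealC t).const_mul (Complex.I * k)).sub_const 1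
  have hnum := hlin.mul hexp
  have hcube : HasDerivAt (fun s : ℝ => 4 * (Real.pi : ℂ) * (s : ℂ) ^ 3)
      (4 * (Real.pi : ℂ) * (3 * (t : ℂ) ^ 2)) t := by
    have h3 : HasDerivAt (fun s : ℝ => ((s : ℂ)) ^ 3) (3 * (t : ℂ) ^ 2) t := by
      exact ((hasDerivAt_ofRealC t).pow 3).congr_deriv (by norm_num)
    simpa [mul_assoc] using h3.const_mul (4 * (Real.pi : ℂ))
  have hden_ne : 4 * (Real.pi : ℂ) * (t : ℂ) ^ 3 ≠ 0 := by
    simp [Real.pi_ne_zero, htC]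
  have h := hnum.div hcube hden_ne
  refine h.congr_deriv ?_
  rw [c2, Pi.mul_apply]
  field_simp [htC, pi_ne_zeroC]
  ring_nf
  simp only [Complex.I_sq]
  ring

lemma hasFDerivAt_normSub (c : V3) {x : V3} (h : x ≠ c) :
    HasFDerivAt (fun w : V3 => ‖w - c‖)
      ((‖x - c‖⁻¹ • innerSL ℝ (x - c)).comp (ContinuousLinearMap.id ℝ V3)) x := by
  have hv : x - c ≠ 0 := sub_ne_zero.mpr h
  exact (hasFDerivAt_norm_ne hv).comp x ((hasFDerivAt_id x).sub_const c)

lemma radial_hasFDerivAt (A A' : ℝ → ℂ) (hA : ∀ t : ℝ, t ≠ 0 → HasDerivAt A (A' t * t) t)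
    (c : V3) {x : V3} (h : x ≠ c) :
    HasFDerivAt (fun w : V3 => A ‖w - c‖)
      ((ContinuousLinearMap.smulRight (1 : ℝ →L[ℝ] ℝ) (A' ‖x - c‖ * ‖x - c‖)).comp
        ((‖x - c‖⁻¹ • innerSL ℝ (x - c)).comp (ContinuousLinearMap.id ℝ V3))) x := by
  have hr : ‖x - c‖ ≠ 0 := by
    simp [sub_eq_zero, h]
  exact (hA ‖x - c‖ hr).hasFDerivAt.comp x (hasFDerivAt_normSub c h)

lemma radial_pd0 (A A' : ℝ → ℂ) (hA : ∀ t : ℝ, t ≠ 0 → HasDerivAt A (A' t * t) t)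
    (c : V3) {x : V3} (h : x ≠ c) (m : Fin 3) :
    pd m (fun w : V3 => A ‖w - c‖) x = A' ‖x - c‖ * (((x - c) m : ℝ) : ℂ) := by
  have hr : ‖x - c‖ ≠ 0 := by simp [sub_eq_zero, h]
  rw [pd, (radial_hasFDerivAt A A' hA c h).fderiv]
  have hrC : ((‖x - c‖ : ℝ) : ℂ) ≠ 0 := by exact_mod_cast hr
  simp [EuclideanSpace.inner_single_right, Complex.real_smul]
  field_simp [hrC]

lemma hasFDerivAt_coord (c : V3) (m : Fin 3) (x : V3) :
    HasFDerivAt (fun w : V3 => (((w - c) m : ℝ) : ℂ))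
      (Complex.ofRealCLM.comp ((EuclideanSpace.proj m : V3 →L[ℝ] ℝ))) x := by
  have h1 : HasFDerivAt (fun w : V3 => (w - c) m)
      ((EuclideanSpace.proj m : V3 →L[ℝ] ℝ)) x := by
    have h2 : HasFDerivAt (fun w : V3 => w m) ((EuclideanSpace.proj m : V3 →L[ℝ] ℝ)) x :=
      (EuclideanSpace.proj m : V3 →L[ℝ] ℝ).hasFDerivAt
    have h3 := h2.sub_const (c m)
    have heq : (fun w : V3 => w m - c m) = fun w : V3 => (w - c) m := by
      funext w; simp
    rwa [heq] at h3
  exact Complex.ofRealCLM.hasFDerivAt.comp x h1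

lemma radial_pd (A A' : ℝ → ℂ) (hA : ∀ t : ℝ, t ≠ 0 → HasDerivAt A (A' t * t) t)
    (c : V3) {x : V3} (h : x ≠ c) (m l : Fin 3) :
    pd l (fun w : V3 => A ‖w - c‖ * (((w - c) m : ℝ) : ℂ)) x
      = A' ‖x - c‖ * (((x - c) m : ℝ) : ℂ) * (((x - c) l : ℝ) : ℂ)
        + A ‖x - c‖ * (if m = l then 1 else 0) := by
  have hr : ‖x - c‖ ≠ 0 := by simp [sub_eq_zero, h]
  have hrC : ((‖x - c‖ : ℝ) : ℂ) ≠ 0 := by exact_mod_cast hr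
  have hmul : HasFDerivAt (fun w : V3 => A ‖w - c‖ * (((w - c) m : ℝ) : ℂ)) _ x :=
    (radial_hasFDerivAt A A' hA c h).mul (hasFDerivAt_coord c m x)
  rw [pd, hmul.fderiv]
  simp [EuclideanSpace.inner_single_right, Complex.real_smul, EuclideanSpace.single_apply,
    apply_ite]
  split_ifs with hml <;> (field_simp [hrC]; ring)

lemma gammaK_phi (k : ℂ) (x y : V3) : gammaK k x y = phi k ‖x - y‖ := by
  rw [gammaK, phi]
  push_cast
  ring_nf

lemma gammaK_symm (k : ℂ) (x y : V3) : gammaK k x y = gammaK k y x := by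
  rw [gammaK, gammaK, norm_sub_rev]

lemma hasDerivAt_c1diff (k1 k2 K : ℂ) : ∀ t : ℝ, t ≠ 0 →
    HasDerivAt (fun t => K * (c1 k1 t - c1 k2 t)) ((K * (c2 k1 t - c2 k2 t)) * t) t :=
  fun t ht => ((((hasDerivAt_c1 k1 ht).sub (hasDerivAt_c1 k2 ht))).const_mul K).congr_deriv
    (by ring)

lemma hasDerivAt_phidiff (k1 k2 : ℂ) : ∀ t : ℝ, t ≠ 0 →
    HasDerivAt (fun t => phi k1 t - phi k2 t) ((c1 k1 t - c1 k2 t) * t) t :=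
  fun t ht => (((hasDerivAt_phi k1 ht).sub (hasDerivAt_phi k2 ht))).congr_deriv (by ring)

lemma pd_gdiff (k1 k2 : ℂ) (y : V3) {z : V3} (hz : z ≠ y) (m : Fin 3) :
    pd m (fun w => gammaK k1 w y - gammaK k2 w y) z
      = (c1 k1 ‖z - y‖ - c1 k2 ‖z - y‖) * (((z - y) m : ℝ) : ℂ) := by
  have heq : (fun w => gammaK k1 w y - gammaK k2 w y)
      = fun w : V3 => (fun t => phi k1 t - phi k2 t) ‖w - y‖ := by
    funext w; simp only [gammaK_phi]
  rw [heq]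
  exact radial_pd0 _ _ (hasDerivAt_phidiff k1 k2) y hz m

/-- Eventual-equality helper: rewriting `pd` along an equality holding near `x`. -/
lemma pd_congr_nhds {f g : V3 → ℂ} {c x : V3} (h : x ≠ c)
    (hfg : ∀ z : V3, z ≠ c → f z = g z) (l : Fin 3) : pd l f x = pd l g x := by
  have hmem : {w : V3 | w ≠ c} ∈ nhds x :=
    (isOpen_compl_singleton).mem_nhds (by simpa using h)
  have hev : f =ᶠ[nhds x] g := Filter.eventually_of_mem hmem fun z hz => hfg z hz
  simp only [pd, hev.fderiv_eq]

lemma pd2_E12 (lam μ gam : ℝ) (k1 k2 : ℂ) {x y : V3} (hxy : x ≠ y) (m l : Fin 3) :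
    pd l (fun z => E12 lam μ gam k1 k2 m z y) x
      = -((gam : ℂ) / ((k1 ^ 2 - k2 ^ 2) * ((lam : ℂ) + 2 * (μ : ℂ)))) *
          ((c2 k1 ‖x - y‖ - c2 k2 ‖x - y‖) * (((x - y) m : ℝ) : ℂ) * (((x - y) l : ℝ) : ℂ)
            + (c1 k1 ‖x - y‖ - c1 k2 ‖x - y‖) * (if m = l then 1 else 0)) := by
  set K : ℂ := -((gam : ℂ) / ((k1 ^ 2 - k2 ^ 2) * ((lam : ℂ) + 2 * (μ : ℂ)))) with hK
  have hstep : pd l (fun z => E12 lam μ gam k1 k2 m z y) x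
      = pd l (fun z : V3 => (fun t => K * (c1 k1 t - c1 k2 t)) ‖z - y‖
          * (((z - y) m : ℝ) : ℂ)) x := by
    apply pd_congr_nhds hxy _ l
    intro z hz
    rw [E12, pd_gdiff k1 k2 y hz m]
    ring
  rw [hstep, radial_pd _ _ (hasDerivAt_c1diff k1 k2 K) y hxy m l]
  ring

lemma pd2_E21 (lam μ ω η : ℝ) (k1 k2 : ℂ) {x y : V3} (hxy : x ≠ y) (m l : Fin 3) :
    pd l (fun z => E21 lam μ ω η k1 k2 m x z) y
      = -(Complex.I * (ω : ℂ) * (η : ℂ) / ((k1 ^ 2 - k2 ^ 2) * ((lam : ℂ) + 2 * (μ : ℂ)))) *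
          ((c2 k1 ‖x - y‖ - c2 k2 ‖x - y‖) * (((x - y) m : ℝ) : ℂ) * (((x - y) l : ℝ) : ℂ)
            + (c1 k1 ‖x - y‖ - c1 k2 ‖x - y‖) * (if m = l then 1 else 0)) := by
  have hyx : y ≠ x := fun hc => hxy hc.symm
  set K : ℂ := -(Complex.I * (ω : ℂ) * (η : ℂ) /
      ((k1 ^ 2 - k2 ^ 2) * ((lam : ℂ) + 2 * (μ : ℂ)))) with hK
  have hstep : pd l (fun z => E21 lam μ ω η k1 k2 m x z) y
      = pd l (fun z : V3 => (fun t => K * (c1 k1 t - c1 k2 t)) ‖z - x‖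
          * (((z - x) m : ℝ) : ℂ)) y := by
    apply pd_congr_nhds hyx _ l
    intro z hz
    have hxz : x ≠ z := fun hc => hz hc.symm
    rw [E21, pd_gdiff k1 k2 z hxz m]
    have h1 : ‖x - z‖ = ‖z - x‖ := norm_sub_rev _ _
    have h2 : ((x - z) m : ℝ) = -((z - x) m : ℝ) := by
      rw [← neg_sub z x]; rfl
    rw [h1, h2]
    push_cast
    ring
  rw [hstep, radial_pd _ _ (hasDerivAt_c1diff k1 k2 K) x hyx m l]
  have h1 : ‖y - x‖ = ‖x - y‖ := norm_sub_rev _ _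
  have h2 : ∀ a : Fin 3, ((y - x) a : ℝ) = -((x - y) a : ℝ) := by
    intro a; rw [← neg_sub x y]; rfl
  rw [h1, h2 m, h2 l]
  push_cast
  ring

lemma pd2_Gx (k1 k2 : ℂ) {x y : V3} (hxy : x ≠ y) (m l : Fin 3) :
    pd l (pd m (fun w => gammaK k1 w y - gammaK k2 w y)) x
      = (c2 k1 ‖x - y‖ - c2 k2 ‖x - y‖) * (((x - y) m : ℝ) : ℂ) * (((x - y) l : ℝ) : ℂ)
        + (c1 k1 ‖x - y‖ - c1 k2 ‖x - y‖) * (if l = m then 1 else 0) := by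
  have hif : (if m = l then (1:ℂ) else 0) = (if l = m then 1 else 0) := by
    by_cases hml : m = l
    · rw [if_pos hml, if_pos hml.symm]
    · rw [if_neg hml, if_neg (fun hh => hml hh.symm)]
  have hstep : pd l (pd m (fun w => gammaK k1 w y - gammaK k2 w y)) x
      = pd l (fun z : V3 => (fun t => (1 : ℂ) * (c1 k1 t - c1 k2 t)) ‖z - y‖
          * (((z - y) m : ℝ) : ℂ)) x := by
    apply pd_congr_nhds hxy _ l
    intro z hz
    rw [pd_gdiff k1 k2 y hz m]
    ring
  rw [hstep, radial_pd _ _ (hasDerivAt_c1diff k1 k2 1) y hxy m l, hif]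
  ring

lemma pd2_Gy (k1 k2 : ℂ) {x y : V3} (hxy : x ≠ y) (m l : Fin 3) :
    pd l (pd m (fun z => gammaK k1 x z - gammaK k2 x z)) y
      = (c2 k1 ‖x - y‖ - c2 k2 ‖x - y‖) * (((x - y) m : ℝ) : ℂ) * (((x - y) l : ℝ) : ℂ)
        + (c1 k1 ‖x - y‖ - c1 k2 ‖x - y‖) * (if l = m then 1 else 0) := by
  have hif : (if m = l then (1:ℂ) else 0) = (if l = m then 1 else 0) := by
    by_cases hml : m = l
    · rw [if_pos hml, if_pos hml.symm]
    · rw [if_neg hml, if_neg (fun hh => hml hh.symm)]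
  have hyx : y ≠ x := fun hc => hxy hc.symm
  have heq : (fun z => gammaK k1 x z - gammaK k2 x z)
      = fun z => gammaK k1 z x - gammaK k2 z x := by
    funext z; rw [gammaK_symm k1 x z, gammaK_symm k2 x z]
  rw [heq]
  have hstep : pd l (pd m (fun z => gammaK k1 z x - gammaK k2 z x)) y
      = pd l (fun z : V3 => (fun t => (1 : ℂ) * (c1 k1 t - c1 k2 t)) ‖z - x‖
          * (((z - x) m : ℝ) : ℂ)) y := by
    apply pd_congr_nhds hyx _ l
    intro z hz
    rw [pd_gdiff k1 k2 x hz m]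
    ring
  rw [hstep, radial_pd _ _ (hasDerivAt_c1diff k1 k2 1) x hyx m l]
  have h1 : ‖y - x‖ = ‖x - y‖ := norm_sub_rev _ _
  have h2 : ∀ a : Fin 3, ((y - x) a : ℝ) = -((x - y) a : ℝ) := by
    intro a; rw [← neg_sub x y]; rfl
  rw [h1, h2 m, h2 l, hif]
  push_cast
  ring

lemma helm (k : ℂ) {t : ℝ} (ht : t ≠ 0) :
    c2 k t * ((t : ℝ) : ℂ) ^ 2 + 3 * c1 k t = -(k ^ 2) * phi k t := by
  have htC : (t : ℂ) ≠ 0 := by exact_mod_cast ht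
  rw [c1, c2, phi]
  field_simp [htC, pi_ne_zeroC]
  ring

lemma norm_sq_coords {x y : V3} :
    (((x - y) 0 : ℝ) : ℂ) ^ 2 + (((x - y) 1 : ℝ) : ℂ) ^ 2 + (((x - y) 2 : ℝ) : ℂ) ^ 2
      = ((‖x - y‖ : ℝ) : ℂ) ^ 2 := by
  have hr : ((x - y) 0 : ℝ) ^ 2 + ((x - y) 1 : ℝ) ^ 2 + ((x - y) 2 : ℝ) ^ 2 = ‖x - y‖ ^ 2 := by
    rw [EuclideanSpace.norm_eq, Real.sq_sqrt (by positivity)]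
    simp [Fin.sum_univ_three]
  exact_mod_cast hr

set_option maxHeartbeats 1000000 in
/-- Matrix identity for the thermoelastic coupling block
`iωη T(∂_x,ν_x)E₁₂ ν_y^⊤ + γ ν_x (T(∂_y,ν_y)E₂₁)^⊤ − iωηγ E₂₂ ν_x ν_y^⊤`,
stated entrywise. -/
theorem stmt_19 (lam μ ω η gam : ℝ) (hμ : 0 < μ) (hlam : 0 < lam + 2 * μ)
    (hω : 0 < ω) (kp k1 k2 : ℂ) (hne : k1 ^ 2 ≠ k2 ^ 2)
    (νx νy : Fin 3 → ℝ) (y x : V3) (hxy : x ≠ y) (i j : Fin 3) :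
    Complex.I * (ω : ℂ) * (η : ℂ) *
        traction lam μ νx (fun l => fun z => E12 lam μ gam k1 k2 l z y) i x *
        (νy j : ℂ)
      + (gam : ℂ) * (νx i : ℂ) *
        traction lam μ νy (fun l => fun z => E21 lam μ ω η k1 k2 l x z) j y
      - Complex.I * (ω : ℂ) * (η : ℂ) * (gam : ℂ) * E22 kp k1 k2 x y *
        (νx i : ℂ) * (νy j : ℂ)
      = (Complex.I * (ω : ℂ) * (η : ℂ) * (gam : ℂ) / (k1 ^ 2 - k2 ^ 2)) *
          ((kp ^ 2 + k1 ^ 2) * gammaK k1 x y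
            - (kp ^ 2 + k2 ^ 2) * gammaK k2 x y) * (νx i : ℂ) * (νy j : ℂ)
        - (2 * Complex.I * (μ : ℂ) * (ω : ℂ) * (η : ℂ) * (gam : ℂ) /
            ((k1 ^ 2 - k2 ^ 2) * ((lam : ℂ) + 2 * (μ : ℂ)))) *
          (gunterM νx (fun l => pd l (fun w => gammaK k1 w y - gammaK k2 w y)) i x *
              (νy j : ℂ)
            + (νx i : ℂ) *
              gunterM νy (fun l => pd l (fun z => gammaK k1 x z - gammaK k2 x z)) j y) := by
  have hr : ‖x - y‖ ≠ 0 := by simp [sub_eq_zero, hxy]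
  have hlmC : ((lam : ℂ) + 2 * (μ : ℂ)) ≠ 0 := by
    have h0 : (lam + 2 * μ : ℝ) ≠ 0 := ne_of_gt hlam
    have h1 : ((lam + 2 * μ : ℝ) : ℂ) ≠ 0 := by exact_mod_cast h0
    push_cast at h1
    exact h1
  have hpq : ((lam : ℂ) + 2 * (μ : ℂ)) * ((k1 ^ 2 - k2 ^ 2) * ((lam : ℂ) + 2 * (μ : ℂ)))⁻¹
      = (k1 ^ 2 - k2 ^ 2)⁻¹ := by
    rw [mul_inv, ← mul_assoc, mul_comm (((lam : ℂ) + 2 * (μ : ℂ))) ((k1 ^ 2 - k2 ^ 2)⁻¹),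
      mul_assoc, mul_inv_cancel₀ hlmC, mul_one]
  have hkey : (c2 k1 ‖x - y‖ - c2 k2 ‖x - y‖) *
        ((((x - y) 0 : ℝ) : ℂ) ^ 2 + (((x - y) 1 : ℝ) : ℂ) ^ 2 + (((x - y) 2 : ℝ) : ℂ) ^ 2)
      + 3 * (c1 k1 ‖x - y‖ - c1 k2 ‖x - y‖)
      + k1 ^ 2 * gammaK k1 x y - k2 ^ 2 * gammaK k2 x y = 0 := by
    rw [gammaK_phi k1, gammaK_phi k2, norm_sq_coords]
    linear_combination helm k1 hr - helm k2 hr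
  have h12 := fun (m l : Fin 3) => pd2_E12 lam μ gam k1 k2 hxy m l
  have h21 := fun (m l : Fin 3) => pd2_E21 lam μ ω η k1 k2 hxy m l
  have hgx := fun (m l : Fin 3) => pd2_Gx k1 k2 hxy m l
  have hgy := fun (m l : Fin 3) => pd2_Gy k1 k2 hxy m l
  simp only [traction, dirD, vdiv, curl, crossR, gunterM, E22, h12, h21, hgx, hgy,
    Fin.sum_univ_three]
  simp only [eps, Prod.mk.injEq, PiLp.sub_apply, Complex.ofReal_sub] at hkey ⊢
  simp only [Fin.isValue, reduceIte, show ((0:Fin 3) = 1) = False from by simp,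
    show ((0:Fin 3) = 2) = False from by simp, show ((1:Fin 3) = 0) = False from by simp,
    show ((1:Fin 3) = 2) = False from by simp, show ((2:Fin 3) = 0) = False from by simp,
    show ((2:Fin 3) = 1) = False from by simp, false_and, and_false, true_and, and_true,
    if_true, if_false, or_false, false_or, Complex.ofReal_one, Complex.ofReal_zero,
    Complex.ofReal_neg, one_mul, zero_mul, mul_zero, neg_zero, mul_one, add_zero, zero_add,
    mul_neg, neg_neg]
  linear_combination (norm := ring)
    ((-2 * Complex.I * (ω : ℂ) * (η : ℂ) * (gam : ℂ) * (νx i : ℂ) * (νy j : ℂ) *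
        ((lam : ℂ) + 2 * (μ : ℂ)) *
        ((k1 ^ 2 - k2 ^ 2) * ((lam : ℂ) + 2 * (μ : ℂ)))⁻¹)) * hkey
    + ((2 * Complex.I * (ω : ℂ) * (η : ℂ) * (gam : ℂ) * (νx i : ℂ) * (νy j : ℂ) *
        (k1 ^ 2 * gammaK k1 x y - k2 ^ 2 * gammaK k2 x y))) * hpq
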